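/- Let $\bar\nabla = \nabla + \mathfrak{T}$ be an adapted statistical connection on an almost $k$-product pseudo-Riemannian manifold $(M,g;\mathcal{D}_1,\ldots,\mathcal{D}_k)$, i.e., $\mathfrak{T}_X Y = 0$ whenever $X\in\mathcal{D}_i$, $Y\in\mathcal{D}_j$ with $i\neq j$. Then the mixed scalar curvatures of $\bar\nabla$ and of the Levi-Civita connection coincide: $\overline{S}_{\mathcal{D}_1,\ldots,\mathcal{D}_k} = S_{\mathcal{D}_1,\ldots,\mathcal{D}_k}$. -/
import Mathlib


/-- For an adapted statistical connection `∇̄ = ∇ + 𝔗` on an almost `k`-product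
pseudo-Riemannian manifold (`𝔗_X Y = 0` for `X ∈ 𝒟_i`, `Y ∈ 𝒟_j`, `i ≠ j`; in frame
components `A a b c = ⟨𝔗_{E_a}E_b,E_c⟩` with assignment `p` and signs `ε`),
using the identity `2(S̄ - S) = ∑_i (⟨tr_{𝒟_i^⊥}𝔗, tr_{𝒟_i}𝔗⟩ - ½⟨𝔗,𝔗⟩_{V(𝒟_i)})`
valid for statistical connections, the mixed scalar curvatures coincide: `S̄ = S`. -/
theorem stmt_12 {ι : Type*} [Fintype ι] (k : ℕ) (p : ι → Fin k)
    (ε : ι → ℝ) (hε : ∀ l, ε l = 1 ∨ ε l = -1)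
    (A : ι → ι → ι → ℝ)
    (hstat : ∀ a b c, A a b c = A b a c ∧ A a b c = A a c b)
    (hadapted : ∀ a b c, p a ≠ p b → A a b c = 0)
    (Sbar S : ℝ)
    (hid : 2 * (Sbar - S) = ∑ i : Fin k,
      ((∑ c, ε c * (∑ b ∈ Finset.univ.filter (fun b => p b ≠ i), ε b * A b b c)
                 * (∑ a ∈ Finset.univ.filter (fun a => p a = i), ε a * A a a c))
        - (1/2) * ∑ a ∈ Finset.univ.filter (fun a => p a = i),
            ∑ b ∈ Finset.univ.filter (fun b => p b ≠ i),
              ε a * ε b * ((∑ c, ε c * A a b c ^ 2) + (∑ c, ε c * A b a c ^ 2)))) :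
    Sbar = S := by
  -- A is fully symmetric, so adaptedness kills any component with mixed indices
  have h2 : ∀ a b c, p a ≠ p c → A a b c = 0 := fun a b c h => by
    rw [(hstat a b c).2]; exact hadapted a c b h
  have h3 : ∀ a b c, p b ≠ p c → A a b c = 0 := fun a b c h => by
    rw [(hstat a b c).1, (hstat b a c).2]; exact hadapted b c a h
  have hzero : (∑ i : Fin k,
      ((∑ c, ε c * (∑ b ∈ Finset.univ.filter (fun b => p b ≠ i), ε b * A b b c)
                 * (∑ a ∈ Finset.univ.filter (fun a => p a = i), ε a * A a a c))
        - (1/2) * ∑ a ∈ Finset.univ.filter (fun a => p a = i),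
            ∑ b ∈ Finset.univ.filter (fun b => p b ≠ i),
              ε a * ε b * ((∑ c, ε c * A a b c ^ 2) + (∑ c, ε c * A b a c ^ 2)))) = 0 := by
    apply Finset.sum_eq_zero
    intro i _
    have hA : (∑ c, ε c * (∑ b ∈ Finset.univ.filter (fun b => p b ≠ i), ε b * A b b c)
                 * (∑ a ∈ Finset.univ.filter (fun a => p a = i), ε a * A a a c)) = 0 := by
      apply Finset.sum_eq_zero
      intro c _
      by_cases hc : p c = i
      · have : (∑ b ∈ Finset.univ.filter (fun b => p b ≠ i), ε b * A b b c) = 0 := by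
          apply Finset.sum_eq_zero
          intro b hb
          rw [Finset.mem_filter] at hb
          rw [h2 b b c (by rw [hc]; exact hb.2)]; ring
        rw [this]; ring
      · have : (∑ a ∈ Finset.univ.filter (fun a => p a = i), ε a * A a a c) = 0 := by
          apply Finset.sum_eq_zero
          intro a ha
          rw [Finset.mem_filter] at ha
          rw [h2 a a c (by rw [ha.2]; exact fun h => hc h.symm)]; ring
        rw [this]; ring
    have hB : (∑ a ∈ Finset.univ.filter (fun a => p a = i),
            ∑ b ∈ Finset.univ.filter (fun b => p b ≠ i),
              ε a * ε b * ((∑ c, ε c * A a b c ^ 2) + (∑ c, ε c * A b a c ^ 2))) = 0 := by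
      apply Finset.sum_eq_zero
      intro a ha
      apply Finset.sum_eq_zero
      intro b hb
      rw [Finset.mem_filter] at ha hb
      have hab : p a ≠ p b := by rw [ha.2]; exact fun h => hb.2 h.symm
      have e1 : (∑ c, ε c * A a b c ^ 2) = 0 := by
        apply Finset.sum_eq_zero
        intro c _
        rw [hadapted a b c hab]; ring
      have e2 : (∑ c, ε c * A b a c ^ 2) = 0 := by
        apply Finset.sum_eq_zero
        intro c _
        rw [hadapted b a c (Ne.symm hab)]; ring
      rw [e1, e2]; ring
    rw [hA, hB]; ring
  rw [hzero] at hid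
  linarith
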